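/- Deterministic ℓ∞ error bound for the weighted Group Lasso: let a ∈ (0,1) and λ > 0, let β̂ be any global minimizer over ℝ^p of β ↦ ℓ(β) + λ Σ_{k=1}^r ‖W_k β_k‖₂, and suppose |W⁻¹Xᵀε|_∞ ≤ aλ and ζ_{a,W} > 0. Then |β̂ − β̊|_∞ ≤ (1+a)λ/ζ_{a,W}. -/

import Mathlib

/-!
Comparing β̂ with β̊ in the minimality of β̂ and bounding the noise term by |W⁻¹Xᵀε|_∞ ≤ aλ
gives the basic inequality Ω(β̂) ≤ Ω(β̊) + a|W(β̂ − β̊)|₁ for the group penalty Ω; as β̊ vanishes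
on the groups outside S, the triangle inequality on each group turns this into β̂ − β̊ ∈ C_{a,W}.
Perturbing β̂ along a single coordinate gives the KKT bound |∇ℓ(β̂)_j| ≤ λ w_j, and since
XᵀX(β̂ − β̊) = ∇ℓ(β̂) + Xᵀε we get |W⁻¹XᵀX(β̂ − β̊)|_∞ ≤ (1 + a)λ, which the definition of
ζ_{a,W} converts into the bound on |β̂ − β̊|_∞.
-/

open scoped BigOperators

/-- Weighted group ℓ₂ norm ‖W_k β_k‖₂ of the subvector of `β` on group `G`. -/
noncomputable def gnorm {p : ℕ} (w β : Fin p → ℝ) (G : Finset (Fin p)) : ℝ :=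
  Real.sqrt (∑ j ∈ G, (w j * β j) ^ 2)

/-- Quadratic loss ℓ(β) = ‖Xβ‖₂²/2 − yᵀXβ. -/
noncomputable def qloss {n p : ℕ} (X : Matrix (Fin n) (Fin p) ℝ) (y : Fin n → ℝ)
    (β : Fin p → ℝ) : ℝ :=
  (∑ i, (X.mulVec β i) ^ 2) / 2 - ∑ i, y i * X.mulVec β i

/-- The ℓ∞ norm of a vector. -/
noncomputable def linf {p : ℕ} (v : Fin p → ℝ) : ℝ := ⨆ j, |v j|

/-- The cone C_{a,W}. -/
def inCone {p r : ℕ} (w : Fin p → ℝ) (G : Fin r → Finset (Fin p))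
    (S : Finset (Fin r)) (a : ℝ) (v : Fin p → ℝ) : Prop :=
  ∑ k ∈ Sᶜ, gnorm w v (G k) ≤ ∑ k ∈ S, gnorm w v (G k) + a * ∑ j, |w j * v j|

/-- The cone invertibility factor ζ_{a,W} = inf over nonzero v in the cone of
|W⁻¹XᵀXv|_∞ / |v|_∞. -/
noncomputable def cif {n p r : ℕ} (X : Matrix (Fin n) (Fin p) ℝ) (w : Fin p → ℝ)
    (G : Fin r → Finset (Fin p)) (S : Finset (Fin r)) (a : ℝ) : ℝ :=
  sInf ((fun v => linf (fun j => (X.transpose.mulVec (X.mulVec v)) j / w j) / linf v) ''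
    {v | inCone w G S a v ∧ v ≠ 0})


open Matrix Filter Topology

noncomputable def groupPenalty {p r : ℕ} (w : Fin p → ℝ) (G : Fin r → Finset (Fin p))
    (β : Fin p → ℝ) : ℝ :=
  ∑ k, gnorm w β (G k)

section GroupNorm

variable {p : ℕ} (w : Fin p → ℝ) (G : Finset (Fin p))

theorem gnorm_eq_norm (β : Fin p → ℝ) :
    gnorm w β G = ‖(WithLp.toLp 2 (fun j : G => w j * β j) : EuclideanSpace ℝ G)‖ := by
  rw [EuclideanSpace.norm_eq, gnorm, ← Finset.sum_coe_sort]
  simp only [Real.norm_eq_abs, sq_abs]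

theorem gnorm_add_le (β γ : Fin p → ℝ) : gnorm w (β + γ) G ≤ gnorm w β G + gnorm w γ G := by
  simp only [gnorm_eq_norm, Pi.add_apply, mul_add]
  exact norm_add_le (WithLp.toLp 2 fun j : G => w j * β j) (WithLp.toLp 2 fun j : G => w j * γ j)

theorem gnorm_le_gnorm_add_add (β γ : Fin p → ℝ) :
    gnorm w β G ≤ gnorm w (β + γ) G + gnorm w γ G := by
  simp only [gnorm_eq_norm, Pi.add_apply, mul_add]
  exact norm_le_add_norm_add (WithLp.toLp 2 fun j : G => w j * β j)
    (WithLp.toLp 2 fun j : G => w j * γ j)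

theorem gnorm_congr {β γ : Fin p → ℝ} (h : ∀ j ∈ G, β j = γ j) : gnorm w β G = gnorm w γ G := by
  unfold gnorm
  congr 1
  exact Finset.sum_congr rfl fun j hj => by rw [h j hj]

theorem gnorm_single (j : Fin p) (t : ℝ) :
    gnorm w (Pi.single j t) G = if j ∈ G then |w j * t| else 0 := by
  unfold gnorm
  split_ifs with hj
  · rw [Finset.sum_eq_single_of_mem j hj fun i _ hi => by simp [hi], Pi.single_eq_same,
      Real.sqrt_sq_eq_abs]
  · rw [Finset.sum_eq_zero fun i hi => by simp [ne_of_mem_of_not_mem hi hj], Real.sqrt_zero]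

end GroupNorm

theorem groupPenalty_add_single_le {p r : ℕ} (w : Fin p → ℝ) {G : Fin r → Finset (Fin p)}
    (hdisj : ∀ k₁ k₂, k₁ ≠ k₂ → Disjoint (G k₁) (G k₂)) (β : Fin p → ℝ) (j : Fin p) (t : ℝ) :
    groupPenalty w G (β + Pi.single j t) ≤ groupPenalty w G β + |w j * t| := by
  have hsingle : ∑ k, gnorm w (Pi.single j t) (G k) ≤ |w j * t| := by
    simp only [gnorm_single]
    by_cases hj : ∃ k, j ∈ G k
    · obtain ⟨k₀, hk₀⟩ := hj
      have hother : ∀ k ∈ Finset.univ, k ≠ k₀ → (if j ∈ G k then |w j * t| else 0) = 0 :=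
        fun k _ hk => if_neg fun hjk => Finset.disjoint_left.mp (hdisj k k₀ hk) hjk hk₀
      rw [Finset.sum_eq_single_of_mem k₀ (Finset.mem_univ _) hother, if_pos hk₀]
    · simp only [not_exists] at hj
      simp only [hj, if_false, Finset.sum_const_zero, abs_nonneg]
  have htriangle : ∑ k, gnorm w (β + Pi.single j t) (G k) ≤
      ∑ k, (gnorm w β (G k) + gnorm w (Pi.single j t) (G k)) :=
    Finset.sum_le_sum fun k _ => gnorm_add_le w (G k) β (Pi.single j t)
  rw [Finset.sum_add_distrib] at htriangle
  unfold groupPenalty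
  linarith

theorem qloss_add {n p : ℕ} (X : Matrix (Fin n) (Fin p) ℝ) (y : Fin n → ℝ) (β d : Fin p → ℝ) :
    qloss X y (β + d) =
      qloss X y β + d ⬝ᵥ (Xᵀ *ᵥ (X *ᵥ β - y)) + (∑ i, (X *ᵥ d) i ^ 2) / 2 := by
  rw [dotProduct_mulVec, vecMul_transpose]
  simp only [qloss, mulVec_add, dotProduct, Pi.add_apply, Pi.sub_apply, Finset.sum_div,
    ← Finset.sum_sub_distrib, ← Finset.sum_add_distrib]
  exact Finset.sum_congr rfl fun i _ => by ring

theorem abs_le_of_forall_nonneg_quadratic {g c b : ℝ}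
    (h : ∀ t : ℝ, 0 ≤ t * g + c * t ^ 2 + b * |t|) : |g| ≤ b := by
  have hpos : ∀ t > 0, |g| ≤ b + c * t := by
    intro t ht
    have h₁ := h t
    have h₂ := h (-t)
    rw [abs_of_pos ht] at h₁
    rw [abs_neg, abs_of_pos ht] at h₂
    rw [abs_le]
    constructor <;> nlinarith
  have hlim : Tendsto (fun t => b + c * t) (𝓝[>] 0) (𝓝 b) := by
    apply tendsto_nhdsWithin_of_tendsto_nhds
    exact Continuous.tendsto' (by fun_prop) 0 b (by simp)
  exact ge_of_tendsto hlim (eventually_nhdsWithin_of_forall hpos)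

theorem abs_gradient_le_of_isMinimizer {n p r : ℕ} (X : Matrix (Fin n) (Fin p) ℝ) (y : Fin n → ℝ)
    (w : Fin p → ℝ) {G : Fin r → Finset (Fin p)}
    (hdisj : ∀ k₁ k₂, k₁ ≠ k₂ → Disjoint (G k₁) (G k₂)) {lam : ℝ} (hlam : 0 ≤ lam)
    {βh : Fin p → ℝ}
    (hmin : ∀ β, qloss X y βh + lam * groupPenalty w G βh ≤ qloss X y β + lam * groupPenalty w G β)
    (j : Fin p) : |(Xᵀ *ᵥ (X *ᵥ βh - y)) j| ≤ lam * |w j| := by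
  refine abs_le_of_forall_nonneg_quadratic (c := (∑ i, X i j ^ 2) / 2) fun t => ?_
  have hloss := qloss_add X y βh (Pi.single j t)
  have hsq : ∑ i, (X *ᵥ Pi.single j t) i ^ 2 = (∑ i, X i j ^ 2) * t ^ 2 := by
    simp only [mulVec_single, Finset.sum_mul]
    exact Finset.sum_congr rfl fun i _ => by simp [col, mul_pow]
  rw [single_dotProduct, hsq] at hloss
  have hpen := mul_le_mul_of_nonneg_left (groupPenalty_add_single_le w hdisj βh j t) hlam
  have hopt := hmin (βh + Pi.single j t)
  rw [abs_mul] at hpen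
  linarith

theorem groupPenalty_le_of_isMinimizer {n p r : ℕ} {X : Matrix (Fin n) (Fin p) ℝ}
    {w : Fin p → ℝ} (hw : ∀ j, 0 ≤ w j) (G : Fin r → Finset (Fin p))
    {βo : Fin p → ℝ} {ε y : Fin n → ℝ} (hy : y = X *ᵥ βo + ε) {a lam : ℝ} (hlam : 0 < lam)
    (hnoise : ∀ j, |(Xᵀ *ᵥ ε) j| ≤ a * lam * w j) {βh : Fin p → ℝ}
    (hmin : ∀ β,
      qloss X y βh + lam * groupPenalty w G βh ≤ qloss X y β + lam * groupPenalty w G β) :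
    groupPenalty w G βh ≤ groupPenalty w G βo + a * ∑ j, |w j * (βh - βo) j| := by
  subst hy
  set v := βh - βo
  have hloss := qloss_add X (X *ᵥ βo + ε) βo v
  rw [add_sub_cancel, sub_add_cancel_left, mulVec_neg, dotProduct_neg] at hloss
  have hcorr : v ⬝ᵥ (Xᵀ *ᵥ ε) ≤ lam * (a * ∑ j, |w j * v j|) := by
    rw [dotProduct, Finset.mul_sum, Finset.mul_sum]
    refine Finset.sum_le_sum fun j _ => ?_
    calc v j * (Xᵀ *ᵥ ε) j ≤ |v j| * |(Xᵀ *ᵥ ε) j| := by rw [← abs_mul]; exact le_abs_self _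
      _ ≤ |v j| * (a * lam * w j) := by gcongr; exact hnoise j
      _ = lam * (a * |w j * v j|) := by rw [abs_mul, abs_of_nonneg (hw j)]; ring
  have hsq : 0 ≤ (∑ i, (X *ᵥ v) i ^ 2) / 2 := by positivity
  have hscaled :
      lam * groupPenalty w G βh ≤ lam * (groupPenalty w G βo + a * ∑ j, |w j * v j|) := by
    linarith [hmin βo]
  exact le_of_mul_le_mul_left hscaled hlam

theorem inCone_of_groupPenalty_add_le {p r : ℕ} {w : Fin p → ℝ} {G : Fin r → Finset (Fin p)}
    {S : Finset (Fin r)} {a : ℝ} {βo v : Fin p → ℝ} (hSc : ∀ k ∉ S, ∀ j ∈ G k, βo j = 0)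
    (h : groupPenalty w G (βo + v) ≤ groupPenalty w G βo + a * ∑ j, |w j * v j|) :
    inCone w G S a v := by
  have hoff : ∀ k ∈ Sᶜ, gnorm w (βo + v) (G k) = gnorm w v (G k) := fun k hk =>
    gnorm_congr w (G k) fun j hj => by simp [hSc k (Finset.mem_compl.mp hk) j hj]
  have hoff₀ : ∀ k ∈ Sᶜ, gnorm w βo (G k) = 0 := fun k hk => by
    rw [gnorm_congr w (G k) (γ := 0) (hSc k (Finset.mem_compl.mp hk))]
    simp [gnorm]
  have hon : ∑ k ∈ S, gnorm w βo (G k) ≤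
      ∑ k ∈ S, gnorm w (βo + v) (G k) + ∑ k ∈ S, gnorm w v (G k) := by
    rw [← Finset.sum_add_distrib]
    exact Finset.sum_le_sum fun k _ => gnorm_le_gnorm_add_add w (G k) βo v
  unfold groupPenalty at h
  rw [← Finset.sum_add_sum_compl S, ← Finset.sum_add_sum_compl S (fun k => gnorm w βo (G k)),
    Finset.sum_congr rfl hoff, Finset.sum_eq_zero hoff₀] at h
  unfold inCone
  linarith

theorem abs_gram_mulVec_sub_le {n p r : ℕ} {X : Matrix (Fin n) (Fin p) ℝ}
    {G : Fin r → Finset (Fin p)} (hdisj : ∀ k₁ k₂, k₁ ≠ k₂ → Disjoint (G k₁) (G k₂))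
    {w : Fin p → ℝ} (hw : ∀ j, 0 ≤ w j) {βo : Fin p → ℝ} {ε y : Fin n → ℝ}
    (hy : y = X *ᵥ βo + ε) {a lam : ℝ} (hlam : 0 ≤ lam)
    (hnoise : ∀ j, |(Xᵀ *ᵥ ε) j| ≤ a * lam * w j) {βh : Fin p → ℝ}
    (hmin : ∀ β, qloss X y βh + lam * groupPenalty w G βh ≤ qloss X y β + lam * groupPenalty w G β)
    (j : Fin p) : |(Xᵀ *ᵥ (X *ᵥ (βh - βo))) j| ≤ (1 + a) * lam * w j := by
  have hsplit : Xᵀ *ᵥ (X *ᵥ (βh - βo)) = Xᵀ *ᵥ (X *ᵥ βh - y) + Xᵀ *ᵥ ε := by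
    rw [← mulVec_add, hy, mulVec_sub, sub_add_eq_sub_sub, sub_add_cancel]
  have hkkt := abs_gradient_le_of_isMinimizer X y w hdisj hlam hmin j
  rw [abs_of_nonneg (hw j)] at hkkt
  rw [hsplit, Pi.add_apply]
  linarith [abs_add_le ((Xᵀ *ᵥ (X *ᵥ βh - y)) j) ((Xᵀ *ᵥ ε) j), hnoise j]

section SupNorm

variable {p : ℕ}

theorem abs_le_linf (v : Fin p → ℝ) (j : Fin p) : |v j| ≤ linf v :=
  le_ciSup (f := fun j => |v j|) (Set.finite_range _).bddAbove j

theorem linf_le [Nonempty (Fin p)] {v : Fin p → ℝ} {c : ℝ} (h : ∀ j, |v j| ≤ c) : linf v ≤ c :=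
  ciSup_le h

theorem linf_nonneg (v : Fin p → ℝ) : 0 ≤ linf v :=
  Real.iSup_nonneg fun _ => abs_nonneg _

theorem linf_zero : linf (0 : Fin p → ℝ) = 0 := by
  simp [linf]

theorem linf_pos {v : Fin p → ℝ} (hv : v ≠ 0) : 0 < linf v := by
  obtain ⟨j, hj⟩ := Function.ne_iff.mp hv
  exact (abs_pos.mpr hj).trans_le (abs_le_linf v j)

end SupNorm

theorem cif_mul_linf_le {n p r : ℕ} (X : Matrix (Fin n) (Fin p) ℝ) (w : Fin p → ℝ)
    (G : Fin r → Finset (Fin p)) (S : Finset (Fin r)) (a : ℝ) {v : Fin p → ℝ}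
    (hv : inCone w G S a v) (hv₀ : v ≠ 0) :
    cif X w G S a * linf v ≤ linf fun j => (Xᵀ *ᵥ (X *ᵥ v)) j / w j := by
  have hbdd : BddBelow ((fun u => linf (fun j => (Xᵀ *ᵥ (X *ᵥ u)) j / w j) / linf u) ''
      {u | inCone w G S a u ∧ u ≠ 0}) :=
    ⟨0, by rintro _ ⟨u, -, rfl⟩; exact div_nonneg (linf_nonneg _) (linf_nonneg _)⟩
  rw [← le_div_iff₀ (linf_pos hv₀)]
  exact csInf_le hbdd ⟨v, ⟨hv, hv₀⟩, rfl⟩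

theorem stmt2_general {n p r : ℕ}
    (X : Matrix (Fin n) (Fin p) ℝ)
    (G : Fin r → Finset (Fin p))
    (hGdisj : ∀ k₁ k₂, k₁ ≠ k₂ → Disjoint (G k₁) (G k₂))
    (w : Fin p → ℝ) (hw : ∀ j, 0 < w j)
    (βo : Fin p → ℝ) (ε : Fin n → ℝ) (y : Fin n → ℝ)
    (hy : y = X.mulVec βo + ε)
    (S : Finset (Fin r)) (hS : ∀ k, k ∈ S ↔ ∃ j ∈ G k, βo j ≠ 0)
    (a : ℝ) (ha : a ∈ Set.Ioo (0 : ℝ) 1)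
    (lam : ℝ) (hlam : 0 < lam)
    (hnoise : ∀ j, |∑ i, X i j * ε i| ≤ a * lam * w j)
    (hzeta : 0 < cif X w G S a)
    (βh : Fin p → ℝ)
    (hmin : ∀ β : Fin p → ℝ,
      qloss X y βh + lam * ∑ k, gnorm w βh (G k) ≤
        qloss X y β + lam * ∑ k, gnorm w β (G k)) :
    linf (βh - βo) ≤ (1 + a) * lam / cif X w G S a := by
  have hw₀ : ∀ j, 0 ≤ w j := fun j => (hw j).le
  have hSc : ∀ k ∉ S, ∀ j ∈ G k, βo j = 0 := fun k hk j hj =>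
    not_not.mp fun hj₀ => hk ((hS k).mpr ⟨j, hj, hj₀⟩)
  have hcone : inCone w G S a (βh - βo) := by
    refine inCone_of_groupPenalty_add_le hSc ?_
    rw [add_sub_cancel]
    exact groupPenalty_le_of_isMinimizer hw₀ G hy hlam hnoise hmin
  rcases eq_or_ne (βh - βo) 0 with hv₀ | hv₀
  · rw [hv₀, linf_zero]
    exact div_nonneg (mul_nonneg (by linarith [ha.1]) hlam.le) hzeta.le
  obtain ⟨j₀, -⟩ := Function.ne_iff.mp hv₀
  have : Nonempty (Fin p) := ⟨j₀⟩
  rw [le_div_iff₀ hzeta, mul_comm]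
  refine (cif_mul_linf_le X w G S a hcone hv₀).trans (linf_le fun j => ?_)
  rw [abs_div, abs_of_pos (hw j), div_le_iff₀ (hw j)]
  exact abs_gram_mulVec_sub_le hGdisj hw₀ hy hlam.le hnoise hmin j

/-- Deterministic ℓ∞ error bound for the weighted Group Lasso:
if |W⁻¹Xᵀε|_∞ ≤ aλ and ζ_{a,W} > 0, then |β̂ − β̊|_∞ ≤ (1+a)λ/ζ_{a,W}. -/
theorem stmt2 {n p r : ℕ} (hn : 0 < n) (hp : 0 < p) (hr : 0 < r)
    (X : Matrix (Fin n) (Fin p) ℝ)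
    (G : Fin r → Finset (Fin p))
    (hGne : ∀ k, (G k).Nonempty)
    (hGdisj : ∀ k₁ k₂, k₁ ≠ k₂ → Disjoint (G k₁) (G k₂))
    (hGcover : ∀ j, ∃ k, j ∈ G k)
    (w : Fin p → ℝ) (hw : ∀ j, 0 < w j)
    (βo : Fin p → ℝ) (ε : Fin n → ℝ) (y : Fin n → ℝ)
    (hy : y = X.mulVec βo + ε)
    (S : Finset (Fin r)) (hS : ∀ k, k ∈ S ↔ ∃ j ∈ G k, βo j ≠ 0)
    (a : ℝ) (ha : a ∈ Set.Ioo (0 : ℝ) 1)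
    (lam : ℝ) (hlam : 0 < lam)
    (hnoise : ∀ j, |∑ i, X i j * ε i| ≤ a * lam * w j)
    (hzeta : 0 < cif X w G S a)
    (βh : Fin p → ℝ)
    (hmin : ∀ β : Fin p → ℝ,
      qloss X y βh + lam * ∑ k, gnorm w βh (G k) ≤
        qloss X y β + lam * ∑ k, gnorm w β (G k)) :
    linf (βh - βo) ≤ (1 + a) * lam / cif X w G S a :=
  stmt2_general X G hGdisj w hw βo ε y hy S hS a ha lam hlam hnoise hzeta βh hmin
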